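/- Let A⁺, A⁻ : ℝ → ℝ and u⁺, u⁻, û, c ∈ ℝ. Assume the Rankine–Hugoniot condition A⁺(u⁺) = A⁻(u⁻) and that the Kruzkov entropy inequality holds at c. Then: (iii) if u⁻ ≤ û < c < u⁺, then A⁺(u⁺) ≤ A⁺(c); (iv) if u⁻ < c < û ≤ u⁺, then A⁻(u⁻) ≤ A⁻(c). -/

import Mathlib

open MeasureTheory Filter Set

/-- The Kruzkov entropy inequality at `c` for data `(um, up, uh)`:
`A⁺(u⁺)·sign(u⁺−c) − 2·sign(u⁺−û)·A⁺(c)·𝟙_{(û,u⁺)}(c) ≤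
 A⁻(u⁻)·sign(u⁻−c) − 2·sign(u⁻−û)·A⁻(c)·𝟙_{(û,u⁻)}(c)`. -/
def KruzkovIneq (Ap Am : ℝ → ℝ) (um up uh c : ℝ) : Prop :=
  Ap up * Real.sign (up - c) -
      2 * Real.sign (up - uh) * Ap c * Set.indicator (Set.uIoo uh up) (1 : ℝ → ℝ) c
    ≤ Am um * Real.sign (um - c) -
      2 * Real.sign (um - uh) * Am c * Set.indicator (Set.uIoo uh um) (1 : ℝ → ℝ) c

section KruzkovIneq

variable {Ap Am : ℝ → ℝ} {um up uh c : ℝ}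

theorem kruzkovIneq_iff_of_le_of_lt_of_lt (hmh : um ≤ uh) (hhc : uh < c) (hcp : c < up) :
    KruzkovIneq Ap Am um up uh c ↔ Ap up - 2 * Ap c ≤ -Am um := by
  have hc_notMem : c ∉ uIoo uh um := by
    rw [uIoo_of_ge hmh]
    exact fun hc => hhc.asymm hc.2
  rw [KruzkovIneq, Real.sign_of_pos (sub_pos.2 hcp),
    Real.sign_of_pos (sub_pos.2 (hhc.trans hcp)), Real.sign_of_neg (sub_neg.2 (hmh.trans_lt hhc)),
    indicator_of_mem (mem_uIoo_of_lt hhc hcp), indicator_of_notMem hc_notMem, Pi.one_apply]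
  constructor <;> intro h <;> linarith

theorem kruzkovIneq_iff_of_lt_of_lt_of_le (hmc : um < c) (hch : c < uh) (hhp : uh ≤ up) :
    KruzkovIneq Ap Am um up uh c ↔ Ap up ≤ 2 * Am c - Am um := by
  have hc_notMem : c ∉ uIoo uh up := by
    rw [uIoo_of_le hhp]
    exact fun hc => hch.asymm hc.1
  -- `sign (up - uh)` may vanish (`uh = up`), but its term is killed by the indicator anyway.
  rw [KruzkovIneq, Real.sign_of_pos (sub_pos.2 (hch.trans_le hhp)),
    Real.sign_of_neg (sub_neg.2 hmc), Real.sign_of_neg (sub_neg.2 (hmc.trans hch)),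
    indicator_of_notMem hc_notMem,
    indicator_of_mem (mem_uIoo_of_gt hmc hch), Pi.one_apply]
  constructor <;> intro h <;> linarith

end KruzkovIneq

theorem stmt_13 (Ap Am : ℝ → ℝ) (up um uh c : ℝ)
    (hRH : Ap up = Am um)
    (hkruz : KruzkovIneq Ap Am um up uh c) :
    (um ≤ uh → uh < c → c < up → Ap up ≤ Ap c) ∧
    (um < c → c < uh → uh ≤ up → Am um ≤ Am c) := by
  constructor
  · intro hmh hhc hcp
    have := (kruzkovIneq_iff_of_le_of_lt_of_lt hmh hhc hcp).1 hkruz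
    linarith
  · intro hmc hch hhp
    have := (kruzkovIneq_iff_of_lt_of_lt_of_le hmc hch hhp).1 hkruz
    linarith
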